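/- Let U be a connected Polish space, let Ū = U ⊔ {†} be the Polish space obtained from U by adjoining an isolated point † ('death state'), and let κ be a Markov kernel on Ū that is strong Feller and absorbing at † (i.e. κ(†,{†}) = 1). If κ admits an invariant probability measure μ with μ(U) = 1 whose topological support equals U, then μ is the only invariant probability measure of κ that is concentrated on U (i.e. the only invariant ν with ν(U) = 1). -/

import Mathlib

/-!
Strong Feller makes `κ(·, A)` continuous. If `A` is absorbing `π`-a.e. for an invariant `π`, then
`κ(·, A)` is `π`-a.e. `{0, 1}`-valued, hence `{0, 1}`-valued on `supp π` and constant there when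
the support is connected: `π` is ergodic. For ergodic `π`, any invariant `ν ≪ π` equals `π`, since
the superlevel sets of `dν/dπ` are absorbing. Apply this to `π = (μ + ν) / 2`, which inherits
invariance, support and full mass on `U` from `μ` and `ν`: then `μ = π = ν`.
-/

open MeasureTheory ProbabilityTheory

/-- A Markov kernel is *strong Feller* if it maps bounded Borel measurable functions to
bounded continuous functions. -/
def IsStrongFeller {X : Type*} [TopologicalSpace X] [MeasurableSpace X]
    (κ : Kernel X X) : Prop :=
  ∀ ψ : X → ℝ, Measurable ψ → (∃ C, ∀ x, |ψ x| ≤ C) →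
    Continuous fun x => ∫ y, ψ y ∂(κ x)

/-- A measure `μ` is *invariant* for the kernel `κ` if `μ A = ∫ κ(x, A) μ(dx)` for every
Borel set `A`. -/
def KernelInvariant {X : Type*} [MeasurableSpace X] (κ : Kernel X X) (μ : Measure X) : Prop :=
  ∀ A : Set X, MeasurableSet A → μ A = ∫⁻ x, κ x A ∂μ

/-- The topological support of a measure: the set of points all of whose open
neighbourhoods have positive measure (the smallest closed set of full measure). -/
def measureSupport {X : Type*} [TopologicalSpace X] [MeasurableSpace X]
    (μ : Measure X) : Set X :=
  {x | ∀ V : Set X, IsOpen V → x ∈ V → 0 < μ V}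

open Set
open scoped ENNReal

def KernelErgodic {X : Type*} [MeasurableSpace X] (κ : Kernel X X) (π : Measure X) : Prop :=
  ∀ A : Set X, MeasurableSet A → (∀ᵐ x ∂π, x ∈ A → κ x A = 1) → π A = 0 ∨ π Aᶜ = 0

section Kernel

variable {X : Type*} [MeasurableSpace X] {κ : Kernel X X}

lemma KernelInvariant.add {μ ν : Measure X} (hμ : KernelInvariant κ μ)
    (hν : KernelInvariant κ ν) : KernelInvariant κ (μ + ν) := fun A hA => by
  rw [Measure.add_apply, hμ A hA, hν A hA, lintegral_add_measure]

lemma KernelInvariant.smul {μ : Measure X} (hμ : KernelInvariant κ μ) (c : ℝ≥0∞) :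
    KernelInvariant κ (c • μ) := fun A hA => by
  rw [Measure.smul_apply, hμ A hA, lintegral_smul_measure, smul_eq_mul]

lemma KernelInvariant.ae_kernel_eq_zero_of_mem_compl {π : Measure X} [IsFiniteMeasure π]
    (hπ : KernelInvariant κ π) {A : Set X} (hA : MeasurableSet A)
    (hAκ : ∀ᵐ x ∂π, x ∈ A → κ x A = 1) : ∀ᵐ x ∂π, x ∈ Aᶜ → κ x A = 0 := by
  have hon : ∫⁻ x in A, κ x A ∂π = π A := by
    rw [← setLIntegral_one]
    exact setLIntegral_congr_fun_ae hA hAκ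
  have hoff : π A + ∫⁻ x in Aᶜ, κ x A ∂π = π A + 0 := by
    rw [← hon, lintegral_add_compl _ hA, hon, hπ A hA, add_zero]
  exact (setLIntegral_eq_zero_iff hA.compl (κ.measurable_coe hA)).1
    ((ENNReal.add_right_inj (measure_ne_top π A)).1 hoff)

/-- With `g = (dν/dπ - c)⁺`, computing `ν A` once as `∫ κ(·, A) dν` and once as `∫_A dν/dπ dπ`
gives `∫ g dπ ≤ ∫ κ(·, A) g dπ`, which forces `κ(·, A) = 1` where `g > 0`. -/
lemma KernelInvariant.ae_kernel_superlevel_rnDeriv_eq_one [IsMarkovKernel κ] {π ν : Measure X}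
    [IsFiniteMeasure π] [IsFiniteMeasure ν] (hπ : KernelInvariant κ π)
    (hν : KernelInvariant κ ν) (hac : ν ≪ π) {c : ℝ≥0∞} (hc : c ≠ ∞) :
    ∀ᵐ x ∂π, c < ν.rnDeriv π x → κ x {y | c < ν.rnDeriv π y} = 1 := by
  set h := ν.rnDeriv π
  set A := {y | c < h y}
  set g := fun x => h x - c
  have hh : Measurable h := Measure.measurable_rnDeriv ν π
  have hA : MeasurableSet A := measurableSet_lt measurable_const hh
  have hκA : Measurable fun x => κ x A := κ.measurable_coe hA
  have hupper : ν A ≤ c * π A + ∫⁻ x, κ x A * g x ∂π :=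
    calc ν A = ∫⁻ x, h x * κ x A ∂π := by rw [hν A hA, lintegral_rnDeriv_mul hac hκA.aemeasurable]
      _ ≤ ∫⁻ x, (c * κ x A + κ x A * g x) ∂π := lintegral_mono fun x => by
          rw [mul_comm c, ← mul_add, mul_comm]
          gcongr
          exact le_add_tsub
      _ = c * π A + ∫⁻ x, κ x A * g x ∂π := by
          rw [lintegral_add_left (hκA.const_mul c), lintegral_const_mul c hκA, hπ A hA]
  have hexact : ν A = c * π A + ∫⁻ x, g x ∂π :=
    calc ν A = ∫⁻ x in A, (c + g x) ∂π := by
          rw [← Measure.setLIntegral_rnDeriv hac]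
          exact setLIntegral_congr_fun hA fun x hx => (add_tsub_cancel_of_le hx.le).symm
      _ = c * π A + ∫⁻ x, g x ∂π := by
          rw [lintegral_add_left measurable_const, setLIntegral_const, mul_comm,
            setLIntegral_eq_of_support_subset (s := A) fun x hx =>
              not_le.1 (mt tsub_eq_zero_of_le hx)]
  have hmass : ∫⁻ x, g x ∂π ≤ ∫⁻ x, κ x A * g x ∂π :=
    ENNReal.le_of_add_le_add_left (ENNReal.mul_ne_top hc (measure_ne_top π A)) (hexact ▸ hupper)
  have hfin : ∫⁻ x, κ x A * g x ∂π ≠ ∞ :=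
    ((lintegral_mono fun x => mul_le_of_le_one_left zero_le prob_le_one).trans
      (hexact ▸ le_add_self)).trans_lt (measure_lt_top ν A) |>.ne
  have heq : (fun x => κ x A * g x) =ᵐ[π] g :=
    ae_eq_of_ae_le_of_lintegral_le (ae_of_all _ fun x => mul_le_of_le_one_left zero_le prob_le_one)
      hfin (hh.sub measurable_const).aemeasurable hmass
  filter_upwards [heq, Measure.rnDeriv_lt_top ν π] with x hx hlt hcx
  exact (ENNReal.mul_eq_right (tsub_pos_of_lt hcx).ne' (ENNReal.sub_ne_top hlt.ne)).1 hx

theorem KernelErgodic.eq_of_absolutelyContinuous [IsMarkovKernel κ] {π ν : Measure X}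
    [IsProbabilityMeasure π] [IsProbabilityMeasure ν] (hπ : KernelErgodic κ π)
    (hπinv : KernelInvariant κ π) (hνinv : KernelInvariant κ ν) (hac : ν ≪ π) : ν = π := by
  have hdensity : π.withDensity (ν.rnDeriv π) = ν := Measure.withDensity_rnDeriv_eq ν π hac
  have hA : MeasurableSet {x | 1 < ν.rnDeriv π x} :=
    measurableSet_lt measurable_const (Measure.measurable_rnDeriv ν π)
  rcases hπ _ hA (hπinv.ae_kernel_superlevel_rnDeriv_eq_one hνinv hac ENNReal.one_ne_top)
    with hnull | hnull
  · have hle : ∀ᵐ x ∂π, ν.rnDeriv π x ≤ 1 := by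
      filter_upwards [measure_eq_zero_iff_ae_notMem.1 hnull] with x hx using not_lt.1 hx
    refine Measure.eq_of_le_of_measure_univ_eq ?_ (by simp)
    calc ν = π.withDensity (ν.rnDeriv π) := hdensity.symm
      _ ≤ π.withDensity 1 := withDensity_mono hle
      _ = π := withDensity_one
  · have hge : ∀ᵐ x ∂π, 1 ≤ ν.rnDeriv π x := by
      filter_upwards [measure_eq_zero_iff_ae_notMem.1 hnull] with x hx
        using le_of_lt (notMem_compl_iff.1 hx)
    refine (Measure.eq_of_le_of_measure_univ_eq ?_ (by simp)).symm
    calc π = π.withDensity 1 := withDensity_one.symm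
      _ ≤ π.withDensity (ν.rnDeriv π) := withDensity_mono hge
      _ = ν := hdensity

end Kernel

section Topology

variable {X : Type*} [TopologicalSpace X] [MeasurableSpace X]

lemma measureSupport_subset_of_ae_mem {μ : Measure X} {F : Set X} (hF : IsClosed F)
    (h : ∀ᵐ x ∂μ, x ∈ F) : measureSupport μ ⊆ F := fun x hx => by
  by_contra hxF
  exact (hx Fᶜ hF.isOpen_compl hxF).ne' (ae_iff.1 h)

lemma measureSupport_mono {μ ν : Measure X} (h : μ ≪ ν) :
    measureSupport μ ⊆ measureSupport ν := fun _ hx V hV hxV =>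
  pos_iff_ne_zero.2 fun h0 => (hx V hV hxV).ne' (h h0)

lemma IsStrongFeller.continuous_measureReal {κ : Kernel X X} (hκ : IsStrongFeller κ)
    {A : Set X} (hA : MeasurableSet A) : Continuous fun x => (κ x).real A := by
  have hbdd : ∃ C, ∀ x, |A.indicator (1 : X → ℝ) x| ≤ C :=
    ⟨1, fun x => by by_cases hx : x ∈ A <;> simp [hx]⟩
  simpa only [integral_indicator_one hA] using hκ _ (measurable_one.indicator hA) hbdd

theorem IsStrongFeller.kernelErgodic {κ : Kernel X X} (hκ : IsStrongFeller κ) {π : Measure X}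
    [IsFiniteMeasure π] (hπ : KernelInvariant κ π) {S : Set X} (hS : IsPreconnected S)
    (hSπ : ∀ᵐ x ∂π, x ∈ S) (hSsupp : S ⊆ measureSupport π) : KernelErgodic κ π := by
  intro A hA hAκ
  have hAcκ := hπ.ae_kernel_eq_zero_of_mem_compl hA hAκ
  set f := fun x => (κ x).real A
  have hf : Continuous f := hκ.continuous_measureReal hA
  have h01 : ∀ x ∈ S, f x ∈ ({0, 1} : Set ℝ) := fun x hx =>
    measureSupport_subset_of_ae_mem (((finite_singleton 1).insert 0).isClosed.preimage hf) (by
      filter_upwards [hAκ, hAcκ] with y h1 h0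
      by_cases hy : y ∈ A
      · simp [f, measureReal_def, h1 hy]
      · simp [f, measureReal_def, h0 hy]) (hSsupp hx)
  by_contra! hpos
  obtain ⟨x₁, hx₁A, hx₁S, hx₁⟩ :=
    Measure.exists_mem_of_measure_ne_zero_of_ae hpos.1 (ae_restrict_of_ae (hSπ.and hAκ))
  obtain ⟨x₀, hx₀A, hx₀S, hx₀⟩ :=
    Measure.exists_mem_of_measure_ne_zero_of_ae hpos.2 (ae_restrict_of_ae (hSπ.and hAcκ))
  have hhalf : (1 / 2 : ℝ) ∈ Icc (f x₀) (f x₁) := by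
    simp only [f, measureReal_def, hx₀ hx₀A, hx₁ hx₁A]
    norm_num
  obtain ⟨y, hyS, hy⟩ := hS.intermediate_value hx₀S hx₁S hf.continuousOn hhalf
  rcases h01 y hyS with h | h <;> rw [hy] at h <;> norm_num at h

end Topology

theorem unique_invariant_of_full_support_general
    {U : Type*} [TopologicalSpace U] [ConnectedSpace U]
    [MeasurableSpace (U ⊕ Unit)] [BorelSpace (U ⊕ Unit)]
    (κ : Kernel (U ⊕ Unit) (U ⊕ Unit)) [IsMarkovKernel κ]
    (hSF : IsStrongFeller κ)
    (μ : Measure (U ⊕ Unit)) [IsProbabilityMeasure μ]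
    (hμinv : KernelInvariant κ μ)
    (hμfull : μ (Set.range Sum.inl) = 1)
    (hμsupp : measureSupport μ = Set.range Sum.inl) :
    ∀ ν : Measure (U ⊕ Unit), IsProbabilityMeasure ν → KernelInvariant κ ν →
      ν (Set.range Sum.inl) = 1 → ν = μ := by
  intro ν hν hνinv hνfull
  set π : Measure (U ⊕ Unit) := (2 : ℝ≥0∞)⁻¹ • (μ + ν)
  have : IsProbabilityMeasure π := ⟨by simp [π, ENNReal.inv_two_add_inv_two]⟩
  have hπinv : KernelInvariant κ π := (hμinv.add hνinv).smul _
  have hμπ : μ ≪ π := (Measure.absolutelyContinuous_of_le (Measure.le_add_right le_rfl)).trans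
    (Measure.absolutelyContinuous_smul (by simp))
  have hνπ : ν ≪ π := (Measure.absolutelyContinuous_of_le (Measure.le_add_left le_rfl)).trans
    (Measure.absolutelyContinuous_smul (by simp))
  have hU : MeasurableSet (range Sum.inl : Set (U ⊕ Unit)) := isOpen_range_inl.measurableSet
  have hπU : ∀ᵐ x ∂π, x ∈ range Sum.inl := by
    change π (range Sum.inl)ᶜ = 0
    rw [Measure.smul_apply, Measure.add_apply, (prob_compl_eq_zero_iff hU).2 hμfull,
      (prob_compl_eq_zero_iff hU).2 hνfull, add_zero, smul_zero]
  have hergodic : KernelErgodic κ π := hSF.kernelErgodic hπinv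
    (isPreconnected_range continuous_inl) hπU (hμsupp ▸ measureSupport_mono hμπ)
  rw [hergodic.eq_of_absolutelyContinuous hπinv hνinv hνπ,
    hergodic.eq_of_absolutelyContinuous hπinv hμinv hμπ]

/-- Let `U` be a connected Polish space and `Ū = U ⊕ Unit` the Polish
space obtained by adjoining an isolated death state `† = Sum.inr ()`.  Let `κ` be a strong
Feller Markov kernel on `Ū` absorbing at `†`.  If `κ` admits an invariant probability
measure `μ` concentrated on `U` whose topological support equals `U`, then `μ` is the
only invariant probability measure of `κ` concentrated on `U`. -/
theorem unique_invariant_of_full_support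
    {U : Type*} [TopologicalSpace U] [PolishSpace U] [ConnectedSpace U]
    [MeasurableSpace (U ⊕ Unit)] [BorelSpace (U ⊕ Unit)]
    (κ : Kernel (U ⊕ Unit) (U ⊕ Unit)) [IsMarkovKernel κ]
    (hSF : IsStrongFeller κ)
    (habs : κ (Sum.inr ()) {Sum.inr ()} = 1)
    (μ : Measure (U ⊕ Unit)) [IsProbabilityMeasure μ]
    (hμinv : KernelInvariant κ μ)
    (hμfull : μ (Set.range Sum.inl) = 1)
    (hμsupp : measureSupport μ = Set.range Sum.inl) :
    ∀ ν : Measure (U ⊕ Unit), IsProbabilityMeasure ν → KernelInvariant κ ν →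
      ν (Set.range Sum.inl) = 1 → ν = μ :=
  unique_invariant_of_full_support_general κ hSF μ hμinv hμfull hμsupp
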